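/- Let Γ ⊂ ℝ^N be an embedded network with a Hamiltonian (H_γ) and a flux limiter (c_x). Let x ∈ V, γ ∈ Γ_x, and let ξ : [a,b] → ℝ^N be an absolutely continuous curve with ξ(a) = ξ(b), ξ([a,b]) ⊆ γ([0,1]), and ξ([a,b]) ∩ (V ∖ {x}) = ∅. Then ∫_a^b L(ξ(τ),ξ̇(τ)) dτ ≥ c_x (b − a). -/

import Mathlib

open Set MeasureTheory Filter Topology
open scoped Classical

noncomputable section

/-! #### Absolutely continuous curves and extended-real integrals -/

/-- `ξ` is absolutely continuous on `[a,b]`, with `ξ'` as a choice of its a.e. derivative: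
`ξ'` is integrable on `[a,b]` and the fundamental theorem of calculus holds. -/
def IsACDerivOn {E : Type*} [NormedAddCommGroup E] [NormedSpace ℝ E]
    (a b : ℝ) (ξ ξ' : ℝ → E) : Prop :=
  IntegrableOn ξ' (Icc a b) ∧ ∀ t ∈ Icc a b, ξ t = ξ a + ∫ τ in a..t, ξ' τ

/-- Extended-real integral on `[a,b]`, suited to integrands which are bounded from below:
it is the Bochner integral when the integrand is a.e. finite and integrable, `+∞` otherwise. -/
def eIntegral (a b : ℝ) (f : ℝ → EReal) : EReal :=
  if IntegrableOn (fun τ => (f τ).toReal) (Icc a b) ∧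
      (∀ᵐ τ ∂(volume.restrict (Icc a b)), f τ ≠ ⊤ ∧ f τ ≠ ⊥) then
    (((∫ τ in Icc a b, (f τ).toReal) : ℝ) : EReal)
  else ⊤

/-! #### One-dimensional Hamiltonians on `[0,1] × ℝ` -/

/-- Standing assumptions on a Hamiltonian `H : [0,1] × ℝ → ℝ`: continuity, convexity in the
momentum variable, and superlinearity in the momentum variable, uniformly in the state. -/
structure IsHamiltonian (H : ℝ → ℝ → ℝ) : Prop where
  cont : ContinuousOn (fun p : ℝ × ℝ => H p.1 p.2) (Icc 0 1 ×ˢ univ)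
  convex : ∀ s ∈ Icc (0:ℝ) 1, ConvexOn ℝ univ fun μ => H s μ
  superlinear : ∀ A : ℝ, ∃ R : ℝ, ∀ s ∈ Icc (0:ℝ) 1, ∀ μ : ℝ, R ≤ |μ| → A * |μ| ≤ H s μ

/-- The Lagrangian associated to `H` via the Fenchel transform:
`L(s,λ) = sup_μ (λ μ - H(s,μ))`. -/
def Lagr (H : ℝ → ℝ → ℝ) (s lam : ℝ) : ℝ :=
  sSup (range fun μ => lam * μ - H s μ)

/-- `c_H = - max_{s ∈ [0,1]} min_{μ ∈ ℝ} H(s,μ)`. -/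
def cHam (H : ℝ → ℝ → ℝ) : ℝ :=
  - sSup ((fun s => sInf (range fun μ => H s μ)) '' Icc 0 1)

/-- The modified Lagrangian `L̄`, equal to `L` for `s ∉ {0,1}` and to
`L(s,λ) + c - L(s,0)` for `s ∈ {0,1}`. -/
def Lbar (H : ℝ → ℝ → ℝ) (c : ℝ) (s lam : ℝ) : ℝ :=
  if s = 0 ∨ s = 1 then Lagr H s lam + c - Lagr H s 0 else Lagr H s lam

/-- The extension `F` of `L̄` to `ℝ × ℝ` obtained by successive reflections:
`F(s,λ) = L̄(s-n,λ)` on `(n,n+1]` for even `n ∈ ℕ`, `F(s,λ) = L̄(1-s+n,λ)` on `(n,n+1]`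
for odd `n ∈ ℕ`, `F(s,λ) = L̄(-s-n,λ)` on `(-n-1,-n]` for even `n ∈ ℕ` and
`F(s,λ) = L̄(s+n+1,λ)` on `(-n-1,-n]` for odd `n ∈ ℕ`; equivalently,
`F(s,λ) = L̄(dist(s, 2ℤ), λ)`. -/
def Fext (H : ℝ → ℝ → ℝ) (c : ℝ) (s lam : ℝ) : ℝ :=
  Lbar H c |s - 2 * (round (s / 2) : ℝ)| lam

/-! #### Viscosity solutions on `Q = (0,1) × (0,+∞)` -/

/-- `Q = (0,1) × (0,+∞)`, first coordinate the state `s`, second the time `t`. -/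
def Qset : Set (ℝ × ℝ) := Ioo 0 1 ×ˢ Ioi 0

/-- `∂Q = ([0,1] × {0}) ∪ ({0,1} × [0,+∞))`. -/
def bdQ : Set (ℝ × ℝ) := (Icc 0 1 ×ˢ {0}) ∪ (({0, 1} : Set ℝ) ×ˢ Ici 0)

/-- `∂⁻Q = ([0,1] × {0}) ∪ ({0} × [0,+∞))`. -/
def bdQminus : Set (ℝ × ℝ) := (Icc 0 1 ×ˢ {0}) ∪ (({0} : Set ℝ) ×ˢ Ici 0)

/-- Viscosity subsolution of `U_t + H(s,U') = 0` in `Q`. -/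
def IsViscSubsol (H : ℝ → ℝ → ℝ) (U : ℝ → ℝ → ℝ) : Prop :=
  ∀ Φ : ℝ → ℝ → ℝ, ContDiff ℝ 1 (fun p : ℝ × ℝ => Φ p.1 p.2) →
    ∀ p : ℝ × ℝ, p ∈ Qset →
      IsLocalMaxOn (fun q : ℝ × ℝ => U q.1 q.2 - Φ q.1 q.2) Qset p →
      deriv (fun t => Φ p.1 t) p.2 + H p.1 (deriv (fun s => Φ s p.2) p.1) ≤ 0

/-- Viscosity supersolution of `U_t + H(s,U') = 0` in `Q`. -/
def IsViscSupersol (H : ℝ → ℝ → ℝ) (U : ℝ → ℝ → ℝ) : Prop :=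
  ∀ Φ : ℝ → ℝ → ℝ, ContDiff ℝ 1 (fun p : ℝ × ℝ => Φ p.1 p.2) →
    ∀ p : ℝ × ℝ, p ∈ Qset →
      IsLocalMinOn (fun q : ℝ × ℝ => U q.1 q.2 - Φ q.1 q.2) Qset p →
      0 ≤ deriv (fun t => Φ p.1 t) p.2 + H p.1 (deriv (fun s => Φ s p.2) p.1)

/-- The Lax–Oleinik value function associated to a boundary datum `g` on `∂Q`:
`V(s,t) = inf { g(s₀,t₀) + ∫_{t₀}^t L(η,η̇) dτ }`, the infimum being over points
`(s₀,t₀) ∈ ∂Q` with `t₀ ≤ t` (where `t₀ = t` is only allowed for the trivial curve) and over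
absolutely continuous curves `η : [t₀,t] → [0,1]` with `η(t₀) = s₀`, `η(t) = s`. -/
def valOn (B : Set (ℝ × ℝ)) (H : ℝ → ℝ → ℝ) (g : ℝ → ℝ → ℝ) (s t : ℝ) : ℝ :=
  sInf {v : ℝ | ∃ s₀ t₀ : ℝ, (s₀, t₀) ∈ B ∧ (t₀ < t ∨ (t₀ = t ∧ s₀ = s)) ∧
    ∃ η η' : ℝ → ℝ, IsACDerivOn t₀ t η η' ∧ (∀ τ ∈ Icc t₀ t, η τ ∈ Icc (0:ℝ) 1) ∧
      η t₀ = s₀ ∧ η t = s ∧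
      (v : EReal) = ((g s₀ t₀ : ℝ) : EReal) +
        eIntegral t₀ t fun τ => ((Lagr H (η τ) (η' τ) : ℝ) : EReal)}

/-- Value function for the boundary datum on `∂Q`. -/
def valV (H : ℝ → ℝ → ℝ) (g : ℝ → ℝ → ℝ) : ℝ → ℝ → ℝ := valOn bdQ H g

/-- Value function for the boundary datum on `∂⁻Q`. -/
def valW (H : ℝ → ℝ → ℝ) (g : ℝ → ℝ → ℝ) : ℝ → ℝ → ℝ := valOn bdQminus H g

/-! #### Embedded networks in `ℝ^N` -/

/-- Euclidean space `ℝ^N`. -/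
abbrev EucN (N : ℕ) := EuclideanSpace ℝ (Fin N)

/-- A regular simple arc in `ℝ^N`, parametrized on `[0,1]`: a `C¹` injective curve with
nowhere vanishing (one-sided at the endpoints) derivative. -/
structure Arc (N : ℕ) where
  toFun : ℝ → EucN N
  deriv : ℝ → EucN N
  hasDeriv : ∀ s ∈ Icc (0:ℝ) 1, HasDerivWithinAt toFun (deriv s) (Icc 0 1) s
  contDeriv : ContinuousOn deriv (Icc 0 1)
  deriv_ne_zero : ∀ s ∈ Icc (0:ℝ) 1, deriv s ≠ 0
  injOn : InjOn toFun (Icc 0 1)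

/-- `γ'` is the inverse parametrization of `γ`: `γ'(s) = γ(1-s)` on `[0,1]`. -/
def Arc.IsInverse {N : ℕ} (γ γ' : Arc N) : Prop :=
  ∀ s ∈ Icc (0:ℝ) 1, γ'.toFun s = γ.toFun (1 - s)

/-- An embedded network in `ℝ^N`: a finite, connected collection of arcs, closed under
inverse parametrization, such that two arcs which are not inverse to each other meet only at
endpoints, vertices (endpoints of arcs) never lie in the interior of an arc, and no arc is a
loop (this is subsumed by injectivity of the arcs on `[0,1]`). -/
structure EmbNetwork (N : ℕ) where
  arcs : Set (Arc N)
  finite : arcs.Finite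
  nonempty : arcs.Nonempty
  closed_inv : ∀ γ ∈ arcs, ∃ γ' ∈ arcs, Arc.IsInverse γ γ'
  disj : ∀ γ ∈ arcs, ∀ γ' ∈ arcs, γ ≠ γ' → ¬ Arc.IsInverse γ γ' →
    (γ.toFun '' Ioo 0 1) ∩ (γ'.toFun '' Icc 0 1) = ∅
  no_vertex_inside : ∀ γ ∈ arcs, ∀ γ' ∈ arcs, ∀ s ∈ Ioo (0:ℝ) 1,
    γ.toFun s ≠ γ'.toFun 0 ∧ γ.toFun s ≠ γ'.toFun 1
  connected : IsConnected (⋃ γ ∈ arcs, γ.toFun '' Icc 0 1)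

namespace EmbNetwork

variable {N : ℕ}

/-- The support `Γ ⊆ ℝ^N` of the network. -/
def carrier (Γ : EmbNetwork N) : Set (EucN N) := ⋃ γ ∈ Γ.arcs, γ.toFun '' Icc 0 1

/-- The set `V` of vertices of the network. -/
def V (Γ : EmbNetwork N) : Set (EucN N) :=
  {x | ∃ γ ∈ Γ.arcs, γ.toFun 0 = x ∨ γ.toFun 1 = x}

/-- The geodesic distance on `Γ` induced by the Euclidean metric: the infimum of the
euclidean lengths of absolutely continuous curves joining `x` to `y` within `Γ`. -/
def geoDist (Γ : EmbNetwork N) (x y : EucN N) : ℝ :=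
  sInf {l : ℝ | ∃ ξ ξ' : ℝ → EucN N, IsACDerivOn 0 1 ξ ξ' ∧
    (∀ t ∈ Icc (0:ℝ) 1, ξ t ∈ Γ.carrier) ∧ ξ 0 = x ∧ ξ 1 = y ∧
    l = ∫ τ in Icc (0:ℝ) 1, ‖ξ' τ‖}

end EmbNetwork

/-! #### Hamiltonians, flux limiters and the Lagrangian on a network -/

/-- A Hamiltonian on the network `Γ`: a family of Hamiltonians indexed by the arcs, each
satisfying the standing assumptions, with the compatibility condition
`H_{γ̃}(s,μ) = H_γ(1-s,-μ)` for inverse arcs. -/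
structure IsNetworkHamiltonian {N : ℕ} (Γ : EmbNetwork N) (H : Arc N → ℝ → ℝ → ℝ) : Prop where
  isHam : ∀ γ ∈ Γ.arcs, IsHamiltonian (H γ)
  compat : ∀ γ ∈ Γ.arcs, ∀ γ' ∈ Γ.arcs, Arc.IsInverse γ γ' →
    ∀ s ∈ Icc (0:ℝ) 1, ∀ μ : ℝ, H γ' s μ = H γ (1 - s) (-μ)

/-- A flux limiter: constants `c x` for the vertices with `c x ≤ min_{γ ∈ Γ_x} c_γ`. -/
def IsFluxLimiter {N : ℕ} (Γ : EmbNetwork N) (H : Arc N → ℝ → ℝ → ℝ)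
    (c : EucN N → ℝ) : Prop :=
  ∀ x ∈ Γ.V, ∀ γ ∈ Γ.arcs, γ.toFun 1 = x → c x ≤ cHam (H γ)

/-- The Lagrangian `L : ℝ^N × ℝ^N → ℝ ∪ {+∞}` of the network, associated to the Hamiltonian
`H` and the flux limiter `c`:  `L(x,q) = L_γ(γ⁻¹(x), (q·γ̇)/|γ̇|²)` if `x ∈ γ((0,1))` and `q`
is parallel to `γ̇(γ⁻¹ x)`; at a vertex `x`, `L(x,0) = c x`, and for `q ≠ 0` tangent,
`L(x,q) = min L_γ(1, (q·γ̇(1))/|γ̇(1)|²)`, the minimum over arcs `γ ∈ Γ_x` with `q` parallel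
to `γ̇(1)`; `L(x,q) = +∞` if `(x,q) ∉ TΓ`. -/
def eLag {N : ℕ} (Γ : EmbNetwork N) (H : Arc N → ℝ → ℝ → ℝ) (c : EucN N → ℝ)
    (x q : EucN N) : EReal :=
  if x ∈ Γ.V then
    if q = 0 then ((c x : ℝ) : EReal)
    else if ∃ γ ∈ Γ.arcs, γ.toFun 1 = x ∧ ∃ lam : ℝ, q = lam • γ.deriv 1 then
      ((sInf {v : ℝ | ∃ γ ∈ Γ.arcs, γ.toFun 1 = x ∧ (∃ lam : ℝ, q = lam • γ.deriv 1) ∧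
        v = Lagr (H γ) 1 ((inner ℝ q (γ.deriv 1) : ℝ) / ‖γ.deriv 1‖ ^ 2)} : ℝ) : EReal)
    else ⊤
  else
    if ∃ γ ∈ Γ.arcs, ∃ s ∈ Ioo (0:ℝ) 1, γ.toFun s = x ∧ ∃ lam : ℝ, q = lam • γ.deriv s then
      ((sInf {v : ℝ | ∃ γ ∈ Γ.arcs, ∃ s ∈ Ioo (0:ℝ) 1, γ.toFun s = x ∧
        (∃ lam : ℝ, q = lam • γ.deriv s) ∧
        v = Lagr (H γ) s ((inner ℝ q (γ.deriv s) : ℝ) / ‖γ.deriv s‖ ^ 2)} : ℝ) : EReal)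
    else ⊤

/-- The (extended-real valued) action `∫_a^b L(ξ,ξ̇) dτ` of a curve. -/
def eAction {N : ℕ} (Γ : EmbNetwork N) (H : Arc N → ℝ → ℝ → ℝ) (c : EucN N → ℝ)
    (a b : ℝ) (ξ ξ' : ℝ → EucN N) : EReal :=
  eIntegral a b fun τ => eLag Γ H c (ξ τ) (ξ' τ)

/-- A curve `ξ : [a,b] → Γ` is admissible if there is a finite partition
`a = t₁ < t₂ < ⋯ < t_m = b` whose interior points are mapped to vertices, such that on each
open subinterval either the curve avoids the vertices and has distinct endpoints, or it is
constantly equal to a vertex. -/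
def Admissible {N : ℕ} (Γ : EmbNetwork N) (a b : ℝ) (ξ : ℝ → EucN N) : Prop :=
  ∃ (n : ℕ) (t : ℕ → ℝ), t 0 = a ∧ t n = b ∧ (∀ i, i < n → t i < t (i + 1)) ∧
    (∀ i, 0 < i → i < n → ξ (t i) ∈ Γ.V) ∧
    ∀ i, i < n →
      ((∀ τ ∈ Ioo (t i) (t (i + 1)), ξ τ ∉ Γ.V) ∧ ξ (t i) ≠ ξ (t (i + 1))) ∨
      ∃ x ∈ Γ.V, ∀ τ ∈ Ioo (t i) (t (i + 1)), ξ τ = x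

/-- The minimal action functional `S(x,t,y,r)`: the infimum of the actions
`∫_0^{r-t} L(ξ,ξ̇) dτ` over absolutely continuous curves `ξ : [0,r-t] → ℝ^N` with
`ξ(0) = x`, `ξ(r-t) = y`. -/
def minAction {N : ℕ} (Γ : EmbNetwork N) (H : Arc N → ℝ → ℝ → ℝ) (c : EucN N → ℝ)
    (x : EucN N) (t : ℝ) (y : EucN N) (r : ℝ) : ℝ :=
  sInf {v : ℝ | ∃ ξ ξ' : ℝ → EucN N, IsACDerivOn 0 (r - t) ξ ξ' ∧
    ξ 0 = x ∧ ξ (r - t) = y ∧ (v : EReal) = eAction Γ H c 0 (r - t) ξ ξ'}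

/-- The Lax–Oleinik formula on the network:
`u(x,t) = inf { ∫_0^t L(ξ,ξ̇) dτ + u₀(ξ(0)) }`, the infimum over absolutely continuous
curves `ξ : [0,t] → Γ` with `ξ(t) = x`. -/
def laxOleinik {N : ℕ} (Γ : EmbNetwork N) (H : Arc N → ℝ → ℝ → ℝ) (c : EucN N → ℝ)
    (u₀ : EucN N → ℝ) (x : EucN N) (t : ℝ) : ℝ :=
  sInf {v : ℝ | ∃ ξ ξ' : ℝ → EucN N, IsACDerivOn 0 t ξ ξ' ∧
    (∀ τ ∈ Icc 0 t, ξ τ ∈ Γ.carrier) ∧ ξ t = x ∧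
    (v : EReal) = ((u₀ (ξ 0) : ℝ) : EReal) + eAction Γ H c 0 t ξ ξ'}

/-! #### Sub- and supersolutions of the time-dependent problem on the network -/

/-- Subsolution of (HJΓ): for every arc, `v ∘ γ` is a viscosity subsolution on `Q`, and at
every vertex `x` and `t₀ > 0`, every `C¹` supertangent `ψ` to `v(x,·)` at `t₀` satisfies
`ψ'(t₀) ≤ c x`. -/
def IsNetSubsol {N : ℕ} (Γ : EmbNetwork N) (H : Arc N → ℝ → ℝ → ℝ) (c : EucN N → ℝ)
    (v : EucN N → ℝ → ℝ) : Prop :=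
  (∀ γ ∈ Γ.arcs, IsViscSubsol (H γ) fun s t => v (γ.toFun s) t) ∧
  ∀ x ∈ Γ.V, ∀ t₀ : ℝ, 0 < t₀ → ∀ ψ : ℝ → ℝ, ContDiff ℝ 1 ψ →
    IsLocalMax (fun t => v x t - ψ t) t₀ → deriv ψ t₀ ≤ c x

/-- Supersolution of (HJΓ): for every arc, `v ∘ γ` is a viscosity supersolution on `Q`, and
at every vertex `x` and `t₀ > 0`, if some `C¹` subtangent `φ` to `v(x,·)` at `t₀` has
`φ'(t₀) < c x`, then there is an arc `γ ∈ Γ_x` such that every `C¹` subtangent `Φ` to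
`v ∘ γ` at `(1,t₀)`, constrained to the closure of `Q`, satisfies
`Φ_t(1,t₀) + H_γ(1,Φ'(1,t₀)) ≥ 0`. -/
def IsNetSupersol {N : ℕ} (Γ : EmbNetwork N) (H : Arc N → ℝ → ℝ → ℝ) (c : EucN N → ℝ)
    (v : EucN N → ℝ → ℝ) : Prop :=
  (∀ γ ∈ Γ.arcs, IsViscSupersol (H γ) fun s t => v (γ.toFun s) t) ∧
  ∀ x ∈ Γ.V, ∀ t₀ : ℝ, 0 < t₀ → ∀ φ : ℝ → ℝ, ContDiff ℝ 1 φ →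
    IsLocalMin (fun t => v x t - φ t) t₀ → deriv φ t₀ < c x →
    ∃ γ ∈ Γ.arcs, γ.toFun 1 = x ∧
      ∀ Φ : ℝ → ℝ → ℝ, ContDiff ℝ 1 (fun p : ℝ × ℝ => Φ p.1 p.2) →
        IsLocalMinOn (fun p : ℝ × ℝ => v (γ.toFun p.1) p.2 - Φ p.1 p.2)
          (Icc 0 1 ×ˢ Ici 0) (1, t₀) →
        0 ≤ deriv (fun t => Φ 1 t) t₀ + H γ 1 (deriv (fun s => Φ s t₀) 1)

end

/-!
Lift `ξ` to the arc: `σ = γ⁻¹ ∘ ξ` is absolutely continuous, since `γ⁻¹` is Lipschitz on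
`γ([0,1])`, and `ξ' = σ' γ'(σ)` a.e. Given `ε > 0`, a partition of unity and the convexity of
`H_γ(s,·)` give a continuous `p` with `H_γ(s, p s) < -c_γ + ε` on `[0,1]`; let `P` be a primitive
of `p`. Where `ξ ≠ x`, Fenchel's inequality gives
`L(ξ, ξ') ≥ p(σ) σ' - H_γ(σ, p(σ)) ≥ (P ∘ σ)' + c_x - ε`; where `ξ = x`, `σ = 1` is a maximum,
so `σ' = 0` and `L(ξ, ξ') = c_x`. Since `ξ a = ξ b`, the absolutely continuous `P ∘ σ` has
`∫ (P ∘ σ)' = 0`, so the action is at least `(c_x - ε)(b - a)`.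
-/

theorem AbsolutelyContinuousOnInterval.of_dist_le_mul {X Y : Type*} [PseudoMetricSpace X]
    [PseudoMetricSpace Y] {f : ℝ → X} {g : ℝ → Y} {a b K : ℝ}
    (hg : AbsolutelyContinuousOnInterval g a b)
    (hfg : ∀ s ∈ uIcc a b, ∀ t ∈ uIcc a b, dist (f s) (f t) ≤ K * dist (g s) (g t)) :
    AbsolutelyContinuousOnInterval f a b := by
  unfold AbsolutelyContinuousOnInterval at hg ⊢
  have hK := hg.const_mul K
  rw [mul_zero] at hK
  refine squeeze_zero' (Eventually.of_forall fun E => Finset.sum_nonneg fun _ _ => dist_nonneg)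
    ?_ hK
  filter_upwards [mem_inf_of_right (mem_principal_self _)] with E hE
  rw [Finset.mul_sum]
  exact Finset.sum_le_sum fun i hi => hfg _ (hE.1 i hi).1 _ (hE.1 i hi).2

theorem AbsolutelyContinuousOnInterval.mul_le_setIntegral_of_ae_deriv_add_le {u F : ℝ → ℝ}
    {a b C : ℝ} (hu : AbsolutelyContinuousOnInterval u a b) (hab : a ≤ b) (hu_ab : u a = u b)
    (hF : IntegrableOn F (Icc a b)) (hle : ∀ᵐ τ, τ ∈ Ioo a b → deriv u τ + C ≤ F τ) :
    C * (b - a) ≤ ∫ τ in Icc a b, F τ := by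
  have hderiv : IntegrableOn (deriv u) (Ioo a b) :=
    (intervalIntegrable_iff_integrableOn_Ioo_of_le hab).1 hu.intervalIntegrable_deriv
  have hC : IntegrableOn (fun _ => C) (Ioo a b) := integrableOn_const measure_Ioo_lt_top.ne
  calc C * (b - a) = ∫ τ in Ioo a b, (deriv u τ + C) := by
        rw [integral_add hderiv hC, ← integral_Ioc_eq_integral_Ioo,
          ← intervalIntegral.integral_of_le hab, hu.integral_deriv_eq_sub, hu_ab, sub_self,
          zero_add, setIntegral_const, Real.volume_real_Ioo_of_le hab, smul_eq_mul, mul_comm]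
    _ ≤ ∫ τ in Ioo a b, F τ :=
        setIntegral_mono_on_ae (hderiv.add hC) (hF.mono_set Ioo_subset_Icc_self)
          measurableSet_Ioo hle
    _ = ∫ τ in Icc a b, F τ := integral_Icc_eq_integral_Ioo.symm

section IsACDerivOn

variable {E : Type*} [NormedAddCommGroup E] [NormedSpace ℝ E] {a b : ℝ} {ξ ξ' : ℝ → E}

theorem IsACDerivOn.intervalIntegrable (hξ : IsACDerivOn a b ξ ξ') {t : ℝ}
    (ht : t ∈ Icc a b) : IntervalIntegrable ξ' volume a t :=
  (intervalIntegrable_iff_integrableOn_Icc_of_le ht.1).2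
    (hξ.1.mono_set (Icc_subset_Icc_right ht.2))

theorem IsACDerivOn.absolutelyContinuousOnInterval (hab : a ≤ b) (hξ : IsACDerivOn a b ξ ξ') :
    AbsolutelyContinuousOnInterval ξ a b := by
  have hint : ∀ t ∈ Icc a b, IntervalIntegrable ξ' volume a t := fun t ht =>
    hξ.intervalIntegrable ht
  refine ((hint b (right_mem_Icc.2 hab)).norm.absolutelyContinuousOnInterval_intervalIntegral
    (c := a) left_mem_uIcc).of_dist_le_mul (K := 1) fun s hs t ht => ?_
  rw [uIcc_of_le hab] at hs ht
  rw [one_mul, dist_eq_norm, dist_eq_norm, hξ.2 s hs, hξ.2 t ht, add_sub_add_left_eq_sub,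
    intervalIntegral.integral_interval_sub_left (hint s hs) (hint t ht),
    intervalIntegral.integral_interval_sub_left (hint s hs).norm (hint t ht).norm, Real.norm_eq_abs]
  exact intervalIntegral.norm_integral_le_abs_integral_norm

theorem IsACDerivOn.ae_hasDerivAt [CompleteSpace E] (hab : a ≤ b) (hξ : IsACDerivOn a b ξ ξ') :
    ∀ᵐ τ, τ ∈ Ioo a b → HasDerivAt ξ (ξ' τ) τ := by
  filter_upwards [(hξ.intervalIntegrable (right_mem_Icc.2 hab)).ae_hasDerivAt_integral]
    with τ hτ hτab
  have hτ' : τ ∈ uIcc a b := by rw [uIcc_of_le hab]; exact Ioo_subset_Icc_self hτab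
  refine ((hτ hτ' a left_mem_uIcc).const_add (ξ a)).congr_of_eventuallyEq ?_
  filter_upwards [Ioo_mem_nhds hτab.1 hτab.2] with t ht
  exact hξ.2 t (Ioo_subset_Icc_self ht)

end IsACDerivOn

theorem IsCompact.exists_pos_mul_dist_le_of_forall_dist_lt {α β : Type*} [MetricSpace α]
    [MetricSpace β] {K : Set α} {f : α → β} (hK : IsCompact K) (hf : ContinuousOn f K)
    (hinj : InjOn f K) {δ c : ℝ} (hδ : 0 < δ) (hc : 0 < c)
    (hloc : ∀ s ∈ K, ∀ t ∈ K, dist s t < δ → c * dist s t ≤ dist (f s) (f t)) :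
    ∃ c' > 0, ∀ s ∈ K, ∀ t ∈ K, c' * dist s t ≤ dist (f s) (f t) := by
  set far := (K ×ˢ K) ∩ {p : α × α | δ ≤ dist p.1 p.2}
  rcases far.eq_empty_or_nonempty with hempty | hne
  · refine ⟨c, hc, fun s hs t ht => hloc s hs t ht (not_le.1 fun h => ?_)⟩
    exact (Set.eq_empty_iff_forall_notMem.1 hempty) (s, t) ⟨⟨hs, ht⟩, h⟩
  have hfar : IsCompact far :=
    (hK.prod hK).inter_right (isClosed_le continuous_const continuous_dist)
  have hcont : ContinuousOn (fun q : α × α => dist (f q.1) (f q.2)) far :=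
    continuous_dist.comp_continuousOn <|
      (hf.comp continuousOn_fst fun q (hq : q ∈ far) => hq.1.1).prodMk
        (hf.comp continuousOn_snd fun q (hq : q ∈ far) => hq.1.2)
  obtain ⟨p, ⟨⟨hp₁, hp₂⟩, hpδ : δ ≤ dist p.1 p.2⟩, hmin⟩ := hfar.exists_isMinOn hne hcont
  obtain ⟨D, hD⟩ := Metric.isBounded_iff.1 hK.isBounded
  have hDpos : 0 < D := hδ.trans_le (hpδ.trans (hD hp₁ hp₂))
  have he : 0 < dist (f p.1) (f p.2) :=
    dist_pos.2 fun h => by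
      have : dist p.1 p.2 = 0 := by rw [hinj hp₁ hp₂ h, dist_self]
      linarith
  refine ⟨min c (dist (f p.1) (f p.2) / D), lt_min hc (div_pos he hDpos), fun s hs t ht => ?_⟩
  rcases lt_or_ge (dist s t) δ with h | h
  · exact (mul_le_mul_of_nonneg_right (min_le_left _ _) dist_nonneg).trans (hloc s hs t ht h)
  · calc min c (dist (f p.1) (f p.2) / D) * dist s t
        ≤ dist (f p.1) (f p.2) / D * D :=
          mul_le_mul (min_le_right _ _) (hD hs ht) dist_nonneg (div_pos he hDpos).le
      _ = dist (f p.1) (f p.2) := div_mul_cancel₀ _ hDpos.ne'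
      _ ≤ dist (f s) (f t) := hmin (show (s, t) ∈ far from ⟨⟨hs, ht⟩, h⟩)

namespace Arc

variable {N : ℕ}

theorem continuousOn (γ : Arc N) : ContinuousOn γ.toFun (Icc 0 1) :=
  fun s hs => (γ.hasDeriv s hs).continuousWithinAt

theorem toFun_zero_ne_toFun_one (γ : Arc N) : γ.toFun 0 ≠ γ.toFun 1 := fun h =>
  zero_ne_one (γ.injOn (left_mem_Icc.2 zero_le_one) (right_mem_Icc.2 zero_le_one) h)

theorem norm_sub_sub_smul_le (γ : Arc N) {s t ε : ℝ} (hs : s ∈ Icc (0:ℝ) 1)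
    (ht : t ∈ Icc (0:ℝ) 1) (hε : ∀ u ∈ uIcc s t, ‖γ.deriv u - γ.deriv t‖ ≤ ε) :
    ‖γ.toFun s - γ.toFun t - (s - t) • γ.deriv t‖ ≤ ε * |s - t| := by
  have hsub : uIcc s t ⊆ Icc 0 1 := uIcc_subset_Icc hs ht
  have hderiv : ∀ u ∈ uIcc s t, HasDerivWithinAt (fun u => γ.toFun u - u • γ.deriv t)
      (γ.deriv u - γ.deriv t) (uIcc s t) u := fun u hu => by
    simpa using ((γ.hasDeriv u (hsub hu)).mono hsub).fun_sub
      ((hasDerivWithinAt_id u _).smul_const (γ.deriv t))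
  have := Convex.norm_image_sub_le_of_norm_hasDerivWithin_le hderiv hε (convex_uIcc s t)
    right_mem_uIcc left_mem_uIcc
  rwa [Real.norm_eq_abs, sub_sub_sub_comm, ← sub_smul] at this

theorem exists_mul_dist_le_of_dist_lt (γ : Arc N) :
    ∃ δ > 0, ∃ c > 0, ∀ s ∈ Icc (0:ℝ) 1, ∀ t ∈ Icc (0:ℝ) 1, dist s t < δ →
      c * dist s t ≤ dist (γ.toFun s) (γ.toFun t) := by
  obtain ⟨s₀, hs₀, hmin⟩ := isCompact_Icc.exists_isMinOn (nonempty_Icc.2 zero_le_one)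
    (continuous_norm.comp_continuousOn γ.contDeriv)
  have hm : 0 < ‖γ.deriv s₀‖ := norm_pos_iff.2 (γ.deriv_ne_zero s₀ hs₀)
  obtain ⟨δ, hδ, hunif⟩ := Metric.uniformContinuousOn_iff.1
    (isCompact_Icc.uniformContinuousOn_of_continuous γ.contDeriv) _ (half_pos hm)
  refine ⟨δ, hδ, _, half_pos hm, fun s hs t ht hst => ?_⟩
  have hrem := γ.norm_sub_sub_smul_le hs ht fun u hu =>
    (hunif u (uIcc_subset_Icc hs ht hu) t ht
      ((Real.dist_le_of_mem_uIcc hu right_mem_uIcc).trans_lt hst)).le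
  have hlin : ‖γ.deriv s₀‖ * |s - t| ≤ ‖(s - t) • γ.deriv t‖ := by
    rw [norm_smul, Real.norm_eq_abs, mul_comm]
    exact mul_le_mul_of_nonneg_left (hmin ht) (abs_nonneg _)
  rw [Real.dist_eq, dist_eq_norm]
  linarith [norm_le_norm_add_norm_sub' ((s - t) • γ.deriv t) (γ.toFun s - γ.toFun t),
    norm_sub_rev ((s - t) • γ.deriv t) (γ.toFun s - γ.toFun t)]

theorem exists_pos_mul_dist_le (γ : Arc N) :
    ∃ c > 0, ∀ s ∈ Icc (0:ℝ) 1, ∀ t ∈ Icc (0:ℝ) 1,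
      c * dist s t ≤ dist (γ.toFun s) (γ.toFun t) := by
  obtain ⟨δ, hδ, c, hc, hloc⟩ := γ.exists_mul_dist_le_of_dist_lt
  exact isCompact_Icc.exists_pos_mul_dist_le_of_forall_dist_lt γ.continuousOn γ.injOn hδ hc hloc

theorem IsInverse.symm {γ γ' : Arc N} (h : γ.IsInverse γ') : γ'.IsInverse γ := fun s hs => by
  simpa using (h (1 - s) ⟨by linarith [hs.2], by linarith [hs.1]⟩).symm

theorem IsInverse.deriv_eq {γ γ' : Arc N} (h : γ.IsInverse γ') {s : ℝ}
    (hs : s ∈ Icc (0:ℝ) 1) : γ'.deriv s = -γ.deriv (1 - s) := by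
  have hmaps : MapsTo (fun u : ℝ => 1 - u) (Icc 0 1) (Icc 0 1) := fun u hu =>
    ⟨by linarith [hu.2], by linarith [hu.1]⟩
  have hcomp : HasDerivWithinAt γ'.toFun ((-1 : ℝ) • γ.deriv (1 - s)) (Icc 0 1) s :=
    ((γ.hasDeriv (1 - s) (hmaps hs)).scomp s
      ((hasDerivWithinAt_id s _).const_sub 1) hmaps).congr h (h s hs)
  rw [neg_one_smul] at hcomp
  exact (uniqueDiffOn_Icc zero_lt_one s hs).eq_deriv _ (γ'.hasDeriv s hs) hcomp

end Arc

namespace IsHamiltonian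

variable {H : ℝ → ℝ → ℝ}

theorem continuous_right (hH : IsHamiltonian H) {s : ℝ} (hs : s ∈ Icc (0:ℝ) 1) :
    Continuous fun μ => H s μ :=
  hH.cont.comp_continuous (continuous_const.prodMk continuous_id) fun _ => ⟨hs, trivial⟩

theorem continuousOn_left (hH : IsHamiltonian H) (μ : ℝ) :
    ContinuousOn (fun s => H s μ) (Icc 0 1) :=
  hH.cont.comp (continuous_id.prodMk continuous_const).continuousOn fun _ hs => ⟨hs, trivial⟩

theorem bddAbove_range_mul_sub (hH : IsHamiltonian H) {s : ℝ} (hs : s ∈ Icc (0:ℝ) 1) (lam : ℝ) :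
    BddAbove (range fun μ => lam * μ - H s μ) := by
  obtain ⟨R, hR⟩ := hH.superlinear (|lam| + 1)
  obtain ⟨C, hC⟩ := (isCompact_Icc (a := -R) (b := R)).bddAbove_image
    ((continuous_const.mul continuous_id).sub (hH.continuous_right hs)).continuousOn
  refine ⟨max C 0, ?_⟩
  rintro _ ⟨μ, rfl⟩
  rcases le_or_gt R |μ| with h | h
  · have hlam : lam * μ ≤ |lam| * |μ| := (le_abs_self _).trans (abs_mul lam μ).le
    have := hR s hs μ h
    exact le_max_of_le_right (by nlinarith [abs_nonneg μ])
  · exact le_max_of_le_left (hC ⟨μ, abs_le.1 h.le, rfl⟩)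

theorem mul_sub_le_lagr (hH : IsHamiltonian H) {s : ℝ} (hs : s ∈ Icc (0:ℝ) 1) (lam μ : ℝ) :
    lam * μ - H s μ ≤ Lagr H s lam :=
  le_csSup (hH.bddAbove_range_mul_sub hs lam) (mem_range_self μ)

theorem bddBelow_range (hH : IsHamiltonian H) {s : ℝ} (hs : s ∈ Icc (0:ℝ) 1) :
    BddBelow (range fun μ => H s μ) :=
  ⟨-Lagr H s 0, by
    rintro _ ⟨μ, rfl⟩
    linarith [hH.mul_sub_le_lagr hs 0 μ]⟩

theorem sInf_le_neg_cHam (hH : IsHamiltonian H) {s : ℝ} (hs : s ∈ Icc (0:ℝ) 1) :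
    sInf (range fun μ => H s μ) ≤ -cHam H := by
  rw [cHam, neg_neg]
  refine le_csSup ?_ (mem_image_of_mem _ hs)
  obtain ⟨C, hC⟩ := isCompact_Icc.bddAbove_image (hH.continuousOn_left 0)
  exact ⟨C, by
    rintro _ ⟨u, hu, rfl⟩
    exact (csInf_le (hH.bddBelow_range hu) (mem_range_self 0)).trans (hC (mem_image_of_mem _ hu))⟩

theorem exists_continuous_lt_neg_cHam_add (hH : IsHamiltonian H) {ε : ℝ} (hε : 0 < ε) :
    ∃ p : C(ℝ, ℝ), ∀ s ∈ Icc (0:ℝ) 1, H s (p s) < -cHam H + ε := by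
  -- the constraint is void off `[0,1]`, so that the selection theorem applies on all of `ℝ`
  set t : ℝ → Set ℝ := fun s => {μ | s ∈ Icc (0:ℝ) 1 → H s μ < -cHam H + ε}
  have hconvex : ∀ s, Convex ℝ (t s) := fun s => by
    by_cases hs : s ∈ Icc (0:ℝ) 1
    · simpa only [t, hs, true_imp_iff, mem_univ, true_and] using
        (hH.convex s hs).convex_lt (-cHam H + ε)
    · simpa only [t, hs, false_imp_iff, ofPred_true] using convex_univ
  have hlocal : ∀ s₀, ∃ μ, ∀ᶠ s in 𝓝 s₀, μ ∈ t s := fun s₀ => by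
    by_cases hs₀ : s₀ ∈ Icc (0:ℝ) 1
    · obtain ⟨_, ⟨μ₀, rfl⟩, hμ₀⟩ := exists_lt_of_csInf_lt (range_nonempty _)
        ((hH.sInf_le_neg_cHam hs₀).trans_lt (lt_add_of_pos_right _ hε))
      exact ⟨μ₀, eventually_nhdsWithin_iff.1
        ((hH.continuousOn_left μ₀ s₀ hs₀).eventually (Iio_mem_nhds hμ₀))⟩
    · have hout : ∀ᶠ s in 𝓝 s₀, s ∉ Icc (0:ℝ) 1 := isClosed_Icc.isOpen_compl.mem_nhds hs₀
      exact ⟨0, hout.mono fun s hs h => absurd h hs⟩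
  obtain ⟨p, hp⟩ := exists_continuous_forall_mem_convex_of_local_const hconvex hlocal
  exact ⟨p, fun s hs => hp s hs⟩

end IsHamiltonian

theorem inner_smul_self_div_norm_sq {E : Type*} [NormedAddCommGroup E] [InnerProductSpace ℝ E]
    {v : E} (hv : v ≠ 0) (lam : ℝ) :
    (inner ℝ (lam • v) v : ℝ) / ‖v‖ ^ 2 = lam := by
  rw [real_inner_smul_left, real_inner_self_eq_norm_sq,
    mul_div_cancel_right₀ _ (pow_ne_zero 2 (norm_ne_zero_iff.2 hv))]

section NetworkLagrangian

variable {N : ℕ} {Γ : EmbNetwork N} {H : Arc N → ℝ → ℝ → ℝ} {γ : Arc N}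

theorem EmbNetwork.isInverse_of_apply_eq {δ : Arc N} (hγ : γ ∈ Γ.arcs) (hδ : δ ∈ Γ.arcs)
    (hδγ : δ ≠ γ) {s s' : ℝ} (hs : s ∈ Icc (0:ℝ) 1) (hs' : s' ∈ Ioo (0:ℝ) 1)
    (h : δ.toFun s' = γ.toFun s) : γ.IsInverse δ := by
  by_contra hinv
  have := Γ.disj δ hδ γ hγ hδγ fun h' => hinv h'.symm
  exact (Set.eq_empty_iff_forall_notMem.1 this) _ ⟨⟨s', hs', h⟩, s, hs, rfl⟩

theorem mul_sub_le_toReal_eLag (hH : IsNetworkHamiltonian Γ H) (c : EucN N → ℝ)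
    (hγ : γ ∈ Γ.arcs) {s : ℝ} (hs : s ∈ Ioo (0:ℝ) 1) (lam μ : ℝ) :
    lam * μ - H γ s μ ≤ (eLag Γ H c (γ.toFun s) (lam • γ.deriv s)).toReal := by
  have hsIcc := Ioo_subset_Icc_self hs
  have hnV : γ.toFun s ∉ Γ.V := by
    rintro ⟨δ, hδ, h | h⟩
    · exact (Γ.no_vertex_inside γ hγ δ hδ s hs).1 h.symm
    · exact (Γ.no_vertex_inside γ hγ δ hδ s hs).2 h.symm
  have hex : ∃ δ ∈ Γ.arcs, ∃ s' ∈ Ioo (0:ℝ) 1, δ.toFun s' = γ.toFun s ∧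
      ∃ l : ℝ, lam • γ.deriv s = l • δ.deriv s' := ⟨γ, hγ, s, hs, rfl, lam, rfl⟩
  rw [eLag, if_neg hnV, if_pos hex, EReal.toReal_coe]
  refine le_csInf ⟨_, γ, hγ, s, hs, rfl, ⟨lam, rfl⟩, rfl⟩ ?_
  rintro _ ⟨δ, hδ, s', hs', hδs', -, rfl⟩
  have hs'Icc := Ioo_subset_Icc_self hs'
  by_cases hδγ : δ = γ
  · subst hδγ
    obtain rfl : s' = s := δ.injOn hs'Icc hsIcc hδs'
    rw [inner_smul_self_div_norm_sq (δ.deriv_ne_zero s' hs'Icc)]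
    exact (hH.isHam δ hδ).mul_sub_le_lagr hsIcc lam μ
  · have hinv := Γ.isInverse_of_apply_eq hγ hδ hδγ hsIcc hs' hδs'
    have h1s' : 1 - s' ∈ Icc (0:ℝ) 1 := ⟨by linarith [hs'Icc.2], by linarith [hs'Icc.1]⟩
    obtain rfl : 1 - s' = s := γ.injOn h1s' hsIcc (by rw [← hinv s' hs'Icc, hδs'])
    rw [hinv.deriv_eq hs'Icc, inner_neg_right, norm_neg, neg_div,
      inner_smul_self_div_norm_sq (γ.deriv_ne_zero _ h1s')]
    have := (hH.isHam δ hδ).mul_sub_le_lagr hs'Icc (-lam) (-μ)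
    rw [hH.compat γ hγ δ hδ hinv s' hs'Icc, neg_neg, neg_mul_neg] at this
    exact this

theorem mul_add_sub_le_toReal_eLag (hH : IsNetworkHamiltonian Γ H) {c : EucN N → ℝ}
    (hc : IsFluxLimiter Γ H c) {x : EucN N} (hx : x ∈ Γ.V) (hγ : γ ∈ Γ.arcs)
    (hγx : γ.toFun 1 = x) {s lam μ ε : ℝ} (hs : s ∈ Ioc (0:ℝ) 1) (hlam : s = 1 → lam = 0)
    (hε : 0 ≤ ε) (hμ : H γ s μ < -cHam (H γ) + ε) :
    lam * μ + (c x - ε) ≤ (eLag Γ H c (γ.toFun s) (lam • γ.deriv s)).toReal := by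
  rcases eq_or_lt_of_le hs.2 with rfl | hs1
  · rw [hlam rfl, zero_smul, hγx, eLag, if_pos hx, if_pos rfl, EReal.toReal_coe, zero_mul, zero_add]
    linarith
  · linarith [mul_sub_le_toReal_eLag hH c hγ ⟨hs.1, hs1⟩ lam μ, hc x hx γ hγ hγx]

end NetworkLagrangian

theorem IsACDerivOn.exists_arc_lift {N : ℕ} {γ : Arc N} {a b : ℝ} (hab : a ≤ b)
    {ξ ξ' : ℝ → EucN N} (hξ : IsACDerivOn a b ξ ξ')
    (hsupp : ∀ t ∈ Icc a b, ξ t ∈ γ.toFun '' Icc 0 1) :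
    ∃ σ : ℝ → ℝ, (∀ t ∈ Icc a b, σ t ∈ Icc (0:ℝ) 1 ∧ γ.toFun (σ t) = ξ t) ∧
      AbsolutelyContinuousOnInterval σ a b ∧
      ∀ᵐ τ, τ ∈ Ioo a b → HasDerivAt σ (deriv σ τ) τ ∧ ξ' τ = deriv σ τ • γ.deriv (σ τ) := by
  set σ := fun t => Function.invFunOn γ.toFun (Icc 0 1) (ξ t)
  have hσ : ∀ t ∈ Icc a b, σ t ∈ Icc (0:ℝ) 1 ∧ γ.toFun (σ t) = ξ t := fun t ht =>
    ⟨Function.invFunOn_mem (hsupp t ht), Function.invFunOn_eq (hsupp t ht)⟩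
  obtain ⟨k, hk, hγk⟩ := γ.exists_pos_mul_dist_le
  have hσac : AbsolutelyContinuousOnInterval σ a b :=
    (hξ.absolutelyContinuousOnInterval hab).of_dist_le_mul (K := k⁻¹) fun s hs t ht => by
      rw [uIcc_of_le hab] at hs ht
      rw [le_inv_mul_iff₀ hk, ← (hσ s hs).2, ← (hσ t ht).2]
      exact hγk _ (hσ s hs).1 _ (hσ t ht).1
  refine ⟨σ, hσ, hσac, ?_⟩
  filter_upwards [hσac.ae_differentiableAt, hξ.ae_hasDerivAt hab] with τ hσd hξd hτ
  have hστ := (hσd (Icc_subset_uIcc (Ioo_subset_Icc_self hτ))).hasDerivAt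
  refine ⟨hστ, (hξd hτ).unique ?_⟩
  have hcomp : HasDerivAt (γ.toFun ∘ σ) (deriv σ τ • γ.deriv (σ τ)) τ :=
    ((γ.hasDeriv _ (hσ τ (Ioo_subset_Icc_self hτ)).1).scomp τ
      (hστ.hasDerivWithinAt (s := Ioo a b))
      fun t ht => (hσ t (Ioo_subset_Icc_self ht)).1).hasDerivAt (Ioo_mem_nhds hτ.1 hτ.2)
  refine hcomp.congr_of_eventuallyEq ?_
  filter_upwards [Ioo_mem_nhds hτ.1 hτ.2] with t ht
  exact (hσ t (Ioo_subset_Icc_self ht)).2.symm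

theorem sub_mul_le_integral_toReal_eLag {N : ℕ} {Γ : EmbNetwork N} {H : Arc N → ℝ → ℝ → ℝ}
    (hH : IsNetworkHamiltonian Γ H) {c : EucN N → ℝ} (hc : IsFluxLimiter Γ H c)
    {x : EucN N} (hx : x ∈ Γ.V) {γ : Arc N} (hγ : γ ∈ Γ.arcs) (hγx : γ.toFun 1 = x)
    {a b : ℝ} (hab : a ≤ b) {ξ ξ' : ℝ → EucN N} (hAC : IsACDerivOn a b ξ ξ')
    (hend : ξ a = ξ b) (hsupp : ∀ t ∈ Icc a b, ξ t ∈ γ.toFun '' Icc 0 1)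
    (hV : ∀ t ∈ Icc a b, ξ t ∉ Γ.V \ {x})
    (hint : IntegrableOn (fun τ => (eLag Γ H c (ξ τ) (ξ' τ)).toReal) (Icc a b))
    {ε : ℝ} (hε : 0 < ε) :
    (c x - ε) * (b - a) ≤ ∫ τ in Icc a b, (eLag Γ H c (ξ τ) (ξ' τ)).toReal := by
  obtain ⟨σ, hσ, hσac, hσd⟩ := hAC.exists_arc_lift hab hsupp
  obtain ⟨p, hp⟩ := (hH.isHam γ hγ).exists_continuous_lt_neg_cHam_add hε
  set P := fun u => ∫ v in (0:ℝ)..u, p v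
  have hP : ∀ u, HasDerivAt P (p u) u := fun u =>
    (p.continuous.integral_hasStrictDerivAt 0 u).hasDerivAt
  obtain ⟨B, hB⟩ := isCompact_Icc.exists_bound_of_continuousOn (s := Icc (0:ℝ) 1)
    p.continuous.continuousOn
  have hPσ : AbsolutelyContinuousOnInterval (P ∘ σ) a b :=
    hσac.of_dist_le_mul (K := B) fun s hs t ht => by
      rw [uIcc_of_le hab] at hs ht
      simpa only [dist_eq_norm, Function.comp_apply] using
        Convex.norm_image_sub_le_of_norm_hasDerivWithin_le (fun u _ => (hP u).hasDerivWithinAt)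
          hB (convex_Icc 0 1) (hσ t ht).1 (hσ s hs).1
  have ha := left_mem_Icc.2 hab
  have hb := right_mem_Icc.2 hab
  have hσab : σ b = σ a := γ.injOn (hσ b hb).1 (hσ a ha).1 (by rw [(hσ b hb).2, (hσ a ha).2, hend])
  have hbound : ∀ᵐ τ, τ ∈ Ioo a b →
      deriv (P ∘ σ) τ + (c x - ε) ≤ (eLag Γ H c (ξ τ) (ξ' τ)).toReal := by
    filter_upwards [hσd] with τ hτd hτ
    obtain ⟨hστ, hξ'τ⟩ := hτd hτ
    obtain ⟨hσmem, hγσ⟩ := hσ τ (Ioo_subset_Icc_self hτ)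
    have hσ0 : σ τ ≠ 0 := fun h0 => hV τ (Ioo_subset_Icc_self hτ)
      ⟨⟨γ, hγ, Or.inl (by rw [← hγσ, h0])⟩,
        fun h => γ.toFun_zero_ne_toFun_one (by rw [hγx, ← h, ← hγσ, h0])⟩
    have hσ1 : σ τ = 1 → deriv σ τ = 0 := fun h1 => IsLocalMax.hasDerivAt_eq_zero (by
      filter_upwards [Ioo_mem_nhds hτ.1 hτ.2] with t ht
      rw [h1]
      exact (hσ t (Ioo_subset_Icc_self ht)).1.2) hστ
    rw [((hP (σ τ)).comp τ hστ).deriv, ← hγσ, hξ'τ, mul_comm]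
    exact mul_add_sub_le_toReal_eLag hH hc hx hγ hγx ⟨hσmem.1.lt_of_ne' hσ0, hσmem.2⟩ hσ1
      hε.le (hp _ hσmem)
  exact hPσ.mul_le_setIntegral_of_ae_deriv_add_le hab (by simp only [Function.comp_apply, hσab])
    hint hbound

/-- Let `x ∈ V`, `γ ∈ Γ_x` and let `ξ : [a,b] → γ([0,1])` be an absolutely
continuous curve with `ξ(a) = ξ(b)` which avoids all vertices except possibly `x`. Then
`∫_a^b L(ξ,ξ̇) dτ ≥ c_x (b - a)`. -/
theorem stmt7 {N : ℕ} (Γ : EmbNetwork N) (H : Arc N → ℝ → ℝ → ℝ)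
    (hH : IsNetworkHamiltonian Γ H) (c : EucN N → ℝ) (hc : IsFluxLimiter Γ H c)
    (x : EucN N) (hx : x ∈ Γ.V) (γ : Arc N) (hγ : γ ∈ Γ.arcs) (hγx : γ.toFun 1 = x)
    (a b : ℝ) (hab : a ≤ b) (ξ ξ' : ℝ → EucN N) (hAC : IsACDerivOn a b ξ ξ')
    (hend : ξ a = ξ b) (hsupp : ∀ t ∈ Icc a b, ξ t ∈ γ.toFun '' Icc 0 1)
    (hV : ∀ t ∈ Icc a b, ξ t ∉ Γ.V \ {x}) :
    eAction Γ H c a b ξ ξ' ≥ ((c x * (b - a) : ℝ) : EReal) := by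
  rw [eAction, eIntegral]
  split_ifs with hF
  · rw [ge_iff_le, EReal.coe_le_coe_iff]
    have hlim : Tendsto (fun ε => (c x - ε) * (b - a)) (𝓝[>] 0) (𝓝 (c x * (b - a))) := by
      have hcont : Continuous fun ε : ℝ => (c x - ε) * (b - a) := by fun_prop
      simpa using (hcont.tendsto 0).mono_left nhdsWithin_le_nhds
    exact le_of_tendsto hlim (eventually_nhdsWithin_of_forall fun ε hε =>
      sub_mul_le_integral_toReal_eLag hH hc hx hγ hγx hab hAC hend hsupp hV hF.1 hε)
  · exact le_top
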